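/- Equivalence of discrete Euler–Lagrange and discrete Hamilton's equations on a Lie group: suppose for each k the momenta are defined by μ_k = −T*_e L_{g_k}·D_{g_k}ℒ_d + Ad*_{f_k⁻¹}(T*_e L_{f_k}·D_{f_k}ℒ_d) − u_k⁻ and μ_{k+1} = T*_e L_{f_k}·D_{f_k}ℒ_d + u_k⁺ (the discrete Legendre transforms). Then the forced discrete Euler–Lagrange equation T*_e L_{f_{k−1}}·D_{f_{k−1}}ℒ_{d,k−1} − Ad*_{f_k⁻¹}(T*_e L_{f_k}·D_{f_k}ℒ_{d,k}) + T*_e L_{g_k}·D_{g_k}ℒ_{d,k} + u_k⁻ + u_{k−1}⁺ = 0 holds if and only if the two expressions for μ_k coming from steps k−1 and k agree; moreover, the momentum update then satisfies μ_{k+1} = Ad*_{f_k}(μ_k + T*_e L_{g_k}·D_{g_k}ℒ_{d,k} + u_k⁻) + u_k⁺. -/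
import Mathlib

/-- equivalence of the forced discrete Euler–Lagrange equation and the
discrete Hamilton's equations on a Lie group, stated in the dual Lie algebra `W = 𝔤*`.
Here `Mfp = T*_e L_{f_{k−1}}·D_{f_{k−1}}ℒ_{d,k−1}`, `Mf = T*_e L_{f_k}·D_{f_k}ℒ_{d,k}`,
`Mg = T*_e L_{g_k}·D_{g_k}ℒ_{d,k}`, `AdFinv = Ad*_{f_k⁻¹}`, `AdF = Ad*_{f_k}` with
`AdF ∘ AdFinv = id`, and the discrete Legendre transforms define
`μ_k = −Mg + AdFinv Mf − u_k⁻` and `μ_{k+1} = Mf + u_k⁺`. The forced discrete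
Euler–Lagrange equation holds iff `μ_k` agrees with the momentum `Mfp + u_{k−1}⁺`
produced at step `k−1`; moreover `μ_{k+1} = AdF (μ_k + Mg + um) + up`. -/
theorem discrete_EL_iff_discrete_Hamilton
    {W : Type*} [AddCommGroup W] [Module ℝ W]
    (AdF AdFinv : W →ₗ[ℝ] W) (hAd : ∀ w, AdF (AdFinv w) = w)
    (Mfp Mf Mg um upp up μk μk1 : W)
    (hμk : μk = -Mg + AdFinv Mf - um)
    (hμk1 : μk1 = Mf + up) :
    (Mfp - AdFinv Mf + Mg + um + upp = 0 ↔ μk = Mfp + upp) ∧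
    μk1 = AdF (μk + Mg + um) + up := by
  constructor
  · subst hμk; constructor <;> intro h
    · have h2 : (Mfp + upp) - (-Mg + AdFinv Mf - um) = 0 := by
        rw [← h]; abel
      exact (sub_eq_zero.mp h2).symm
    · have h2 : (Mfp + upp) - (-Mg + AdFinv Mf - um) = 0 := sub_eq_zero.mpr h.symm
      rw [← h2]; abel
  · have : μk + Mg + um = AdFinv Mf := by subst hμk; abel
    rw [this, hAd, hμk1]
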